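/- Let G be a finite group of linear maps on ℝ^d with ‖gx‖_∞ ≤ 1 for all g ∈ G and x ∈ Ω, and let S = (x₁,…,x_M) ⊆ Ω. Define ℳ_R = { x ↦ ∑_{p=1}^{K} â_p 𝒢ReLU(ŵ_p·x + b̂_p) : K ≥ 1, ∑_p |â_p|(‖ŵ_p‖₁+|b̂_p|) ≤ R }, where 𝒢ReLU(w·x+b) = (1/|G|)∑_{g∈G} ReLU(w·gx+b). Then R̂_S(ℳ_R) ≤ 2√2 · R · √(2 log(2d+2)/M). -/

import Mathlib

/-!
Since the ReLU is positively homogeneous, each term `aₚ 𝒢ReLU(wₚ·x + bₚ)` of a network is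
`aₚ ‖(wₚ, bₚ)‖₁` times a neuron with parameters in the unit `ℓ¹` ball, so the Rademacher sum of
`ℳ_R` is at most `R` times `E sup_{‖(w, b)‖₁ ≤ 1} |∑ᵢ σᵢ 𝒢ReLU(w·xᵢ + b)|`. Dropping the absolute
value costs a factor `2` (flipping all signs negates the sum, and the zero neuron makes every
supremum nonnegative); the supremum of a `G`-average is at most the `G`-average of the suprema;
and for each `g` the Ledoux–Talagrand contraction principle removes the `1`-Lipschitz ReLU. What
is left is the supremum over the `ℓ¹` ball of a linear functional of `(w, b)`, attained at one of
its `2d + 2` vertices, and Massart's finite class lemma bounds its expectation by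
`√(2 M log (2d + 2))`.
-/

open Finset Real

/-- Empirical Rademacher complexity on a sample `x : Fin M → Ω`. -/
noncomputable def empRad {Ω : Type*} {M : ℕ} (F : Set (Ω → ℝ)) (x : Fin M → Ω) : ℝ :=
  (M : ℝ)⁻¹ * ((2 ^ M : ℝ)⁻¹ * ∑ ξ : Fin M → Bool,
    sSup ((fun f : Ω → ℝ => ∑ i, (if ξ i then (1 : ℝ) else -1) * f (x i)) '' F))

/-- The class of `G`-averaged two-layer ReLU networks with path norm at most `R`. -/
def reluClassG {d : ℕ} (G : Type*) [Group G] [Fintype G] [MulAction G (Fin d → ℝ)]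
    (R : ℝ) : Set ((Fin d → ℝ) → ℝ) :=
  {h | ∃ (K : ℕ) (_ : 1 ≤ K) (a : Fin K → ℝ) (w : Fin K → Fin d → ℝ) (b : Fin K → ℝ),
    (∑ p, |a p| * ((∑ j, |w p j|) + |b p|)) ≤ R ∧
    h = fun z => ∑ p, a p * ((Fintype.card G : ℝ)⁻¹ *
      ∑ g : G, max ((∑ j, w p j * (g • z) j) + b p) 0)}

noncomputable def boolSign (b : Bool) : ℝ := if b then 1 else -1

@[simp] lemma boolSign_true : boolSign true = 1 := rfl

@[simp] lemma boolSign_false : boolSign false = -1 := rfl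

lemma boolSign_not (b : Bool) : boolSign (!b) = -boolSign b := by cases b <;> simp

lemma abs_boolSign (b : Bool) : |boolSign b| = 1 := by cases b <;> simp

section Rademacher

variable {M : ℕ}

lemma abs_sum_boolSign_mul_le (ξ : Fin M → Bool) {v : Fin M → ℝ} {C : ℝ}
    (hv : ∀ i, |v i| ≤ C) : |∑ i, boolSign (ξ i) * v i| ≤ M * C :=
  calc |∑ i, boolSign (ξ i) * v i| ≤ ∑ i, |boolSign (ξ i) * v i| := abs_sum_le_sum_abs _ _
    _ ≤ ∑ _i : Fin M, C :=
        sum_le_sum fun i _ => by rw [abs_mul, abs_boolSign, one_mul]; exact hv i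
    _ = M * C := by simp

lemma bddAbove_range_sum_boolSign_mul {T : Type*} (ξ : Fin M → Bool) {v : Fin M → T → ℝ}
    {C : ℝ} (hv : ∀ i t, |v i t| ≤ C) : BddAbove (Set.range fun t => ∑ i, boolSign (ξ i) * v i t) :=
  ⟨M * C, by rintro _ ⟨t, rfl⟩; exact (abs_le.1 (abs_sum_boolSign_mul_le ξ (hv · t))).2⟩

lemma sum_exp_mul_sum_boolSign_mul (c : ℝ) (v : Fin M → ℝ) :
    ∑ ξ : Fin M → Bool, exp (c * ∑ i, boolSign (ξ i) * v i) = 2 ^ M * ∏ i, cosh (c * v i) := by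
  have hcosh : ∀ i, ∑ b : Bool, exp (c * (boolSign b * v i)) = 2 * cosh (c * v i) := fun i => by
    rw [Fintype.sum_bool, boolSign_true, boolSign_false, one_mul, neg_one_mul, mul_neg, cosh_eq]
    ring
  calc ∑ ξ : Fin M → Bool, exp (c * ∑ i, boolSign (ξ i) * v i)
      = ∑ ξ : Fin M → Bool, ∏ i, exp (c * (boolSign (ξ i) * v i)) := by
        simp [mul_sum, exp_sum]
    _ = ∏ i, ∑ b : Bool, exp (c * (boolSign b * v i)) :=
        (Fintype.prod_sum fun i (b : Bool) => exp (c * (boolSign b * v i))).symm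
    _ = 2 ^ M * ∏ i, cosh (c * v i) := by simp only [hcosh, prod_mul_distrib]; simp

lemma sum_exp_mul_sum_boolSign_mul_le (c : ℝ) {v : Fin M → ℝ} (hv : ∀ i, |v i| ≤ 1) :
    ∑ ξ : Fin M → Bool, exp (c * ∑ i, boolSign (ξ i) * v i) ≤ 2 ^ M * exp (M * c ^ 2 / 2) := by
  rw [sum_exp_mul_sum_boolSign_mul]
  gcongr
  calc ∏ i, cosh (c * v i) ≤ ∏ _i : Fin M, exp (c ^ 2 / 2) := by
        refine prod_le_prod (fun i _ => (cosh_pos _).le) fun i _ => ?_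
        refine (cosh_le_exp_half_sq _).trans (exp_le_exp.2 ?_)
        have : v i ^ 2 ≤ 1 := by nlinarith [sq_abs (v i), abs_nonneg (v i), hv i]
        nlinarith [sq_nonneg c]
    _ = exp (M * c ^ 2 / 2) := by rw [prod_const, ← exp_nat_mul]; simp [mul_div_assoc]

lemma sum_sup'_sum_boolSign_mul_le_of_pos {K : Type*} [Fintype K] [Nonempty K]
    (v : K → Fin M → ℝ) (hv : ∀ κ i, |v κ i| ≤ 1) {c : ℝ} (hc : 0 < c) :
    ∑ ξ : Fin M → Bool, univ.sup' univ_nonempty (fun κ => ∑ i, boolSign (ξ i) * v κ i)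
      ≤ 2 ^ M * (log (Fintype.card K) / c + M * c / 2) := by
  set Z : (Fin M → Bool) → ℝ :=
    fun ξ => univ.sup' univ_nonempty (fun κ => ∑ i, boolSign (ξ i) * v κ i)
  have hZ : ∀ ξ, exp (c * Z ξ) ≤ ∑ κ, exp (c * ∑ i, boolSign (ξ i) * v κ i) := fun ξ => by
    obtain ⟨κ, -, hκ⟩ := exists_mem_eq_sup' univ_nonempty fun κ => ∑ i, boolSign (ξ i) * v κ i
    simp only [Z, hκ]
    exact single_le_sum (f := fun κ => exp (c * ∑ i, boolSign (ξ i) * v κ i))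
      (fun _ _ => (exp_pos _).le) (mem_univ κ)
  have hw : ∑ _ξ : Fin M → Bool, ((2 : ℝ) ^ M)⁻¹ = 1 := by simp
  have hjensen := convexOn_exp.map_sum_le (t := univ) (p := fun ξ => c * Z ξ)
    (fun _ _ => by positivity) hw (fun _ _ => Set.mem_univ _)
  have hexp : exp (c * (((2 : ℝ) ^ M)⁻¹ * ∑ ξ, Z ξ))
      ≤ exp (log (Fintype.card K) + M * c ^ 2 / 2) := by
    rw [exp_add, exp_log (by exact_mod_cast Fintype.card_pos)]
    calc exp (c * (((2 : ℝ) ^ M)⁻¹ * ∑ ξ, Z ξ))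
        ≤ ((2 : ℝ) ^ M)⁻¹ * ∑ ξ, exp (c * Z ξ) := by
          simpa [smul_eq_mul, mul_sum, mul_left_comm] using hjensen
      _ ≤ ((2 : ℝ) ^ M)⁻¹ *
            ∑ κ, ∑ ξ : Fin M → Bool, exp (c * ∑ i, boolSign (ξ i) * v κ i) := by
          rw [sum_comm (γ := K)]; gcongr with ξ; exact hZ ξ
      _ ≤ ((2 : ℝ) ^ M)⁻¹ * ∑ _κ : K, 2 ^ M * exp (M * c ^ 2 / 2) := by
          gcongr with κ; exact sum_exp_mul_sum_boolSign_mul_le c (hv κ)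
      _ = Fintype.card K * exp (M * c ^ 2 / 2) := by
          rw [sum_const, card_univ, nsmul_eq_mul]; field_simp
  have hmean : ((2 : ℝ) ^ M)⁻¹ * ∑ ξ, Z ξ ≤ log (Fintype.card K) / c + M * c / 2 := by
    have := exp_le_exp.1 hexp
    rw [div_add' _ _ _ hc.ne', le_div_iff₀ hc]
    linarith
  rwa [inv_mul_le_iff₀ (by positivity)] at hmean

/-- Massart's finite class lemma. -/
theorem sum_sup'_sum_boolSign_mul_le {K : Type*} [Fintype K] [Nonempty K]
    (hK : 1 < Fintype.card K) (v : K → Fin M → ℝ) (hv : ∀ κ i, |v κ i| ≤ 1) :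
    ∑ ξ : Fin M → Bool, univ.sup' univ_nonempty (fun κ => ∑ i, boolSign (ξ i) * v κ i)
      ≤ 2 ^ M * √(2 * M * log (Fintype.card K)) := by
  obtain rfl | hM := M.eq_zero_or_pos
  · simp
  have hlog : 0 < log (Fintype.card K) := log_pos (by exact_mod_cast hK)
  have hMpos : (0 : ℝ) < M := by exact_mod_cast hM
  set c := √(2 * log (Fintype.card K) / M)
  have hc : 0 < c := sqrt_pos.2 (by positivity)
  have hc2 : c ^ 2 = 2 * log (Fintype.card K) / M := sq_sqrt (by positivity)
  -- `c` balances the two terms: `log |K| / c = M c / 2`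
  have hopt : log (Fintype.card K) / c + M * c / 2 = √(2 * M * log (Fintype.card K)) := by
    rw [show 2 * M * log (Fintype.card K) = (M * c) ^ 2 by rw [mul_pow, hc2]; field_simp,
      sqrt_sq (by positivity)]
    have : c ^ 2 * M = 2 * log (Fintype.card K) := by rw [hc2]; field_simp
    field_simp
    linarith
  exact hopt ▸ sum_sup'_sum_boolSign_mul_le_of_pos v hv hc

lemma ciSup_add_ciSup_le_of_abs_sub_le {T : Type*} [Nonempty T] {r p q : T → ℝ}
    (hpq : ∀ t s, |p t - p s| ≤ |q t - q s|) (hadd : BddAbove (Set.range fun t => r t + q t))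
    (hsub : BddAbove (Set.range fun t => r t - q t)) :
    (⨆ t, r t + p t) + ⨆ t, r t - p t ≤ (⨆ t, r t + q t) + ⨆ t, r t - q t := by
  have key : ∀ t s, (r t + p t) + (r s - p s) ≤ (⨆ t, r t + q t) + ⨆ t, r t - q t := by
    intro t s
    have hp := (le_abs_self _).trans (hpq t s)
    have := le_ciSup hadd t; have := le_ciSup hadd s
    have := le_ciSup hsub t; have := le_ciSup hsub s
    rcases abs_cases (q t - q s) with ⟨h, -⟩ | ⟨h, -⟩ <;> linarith
  have hp : ∀ t, r t + p t ≤ (⨆ t, r t + q t) + (⨆ t, r t - q t) - ⨆ s, r s - p s :=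
    fun t => le_sub_iff_add_le'.2 (le_sub_iff_add_le.1 (ciSup_le fun s => by linarith [key t s]))
  linarith [ciSup_le hp]

/-- Pairing each `ξ` with `ξ` flipped at `k` reduces this to
`ciSup_add_ciSup_le_of_abs_sub_le`. -/
lemma sum_ciSup_sum_boolSign_mul_le_of_ne {T : Type*} [Nonempty T] {Ψ Ψ' : Fin M → T → ℝ}
    (k : Fin M) (hne : ∀ i ≠ k, Ψ i = Ψ' i) (hk : ∀ t s, |Ψ k t - Ψ k s| ≤ |Ψ' k t - Ψ' k s|)
    (hbdd : ∀ ξ : Fin M → Bool, BddAbove (Set.range fun t => ∑ i, boolSign (ξ i) * Ψ' i t)) :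
    ∑ ξ : Fin M → Bool, ⨆ t, ∑ i, boolSign (ξ i) * Ψ i t
      ≤ ∑ ξ : Fin M → Bool, ⨆ t, ∑ i, boolSign (ξ i) * Ψ' i t := by
  classical
  let flip : Equiv.Perm (Fin M → Bool) := Function.Involutive.toPerm
    (fun ξ => Function.update ξ k (!ξ k)) fun ξ => by ext i; by_cases hi : i = k <;> simp [hi]
  have hpair : ∀ F : (Fin M → Bool) → ℝ, ∑ ξ, F ξ = 2⁻¹ * ∑ ξ, (F ξ + F (flip ξ)) :=
    fun F => by rw [sum_add_distrib, Equiv.sum_comp flip F]; ring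
  rw [hpair fun ξ => ⨆ t, ∑ i, boolSign (ξ i) * Ψ i t,
    hpair fun ξ => ⨆ t, ∑ i, boolSign (ξ i) * Ψ' i t]
  refine mul_le_mul_of_nonneg_left (sum_le_sum fun ξ _ => ?_) (by norm_num)
  set r : T → ℝ := fun t => ∑ i ∈ univ.erase k, boolSign (ξ i) * Ψ i t
  have hdecomp : ∀ (ζ : Fin M → Bool) (Φ : Fin M → T → ℝ), (∀ i ≠ k, ζ i = ξ i) →
      (∀ i ≠ k, Φ i = Ψ i) →
        ∀ t, ∑ i, boolSign (ζ i) * Φ i t = r t + boolSign (ζ k) * Φ k t := by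
    intro ζ Φ hζ hΦ t
    rw [← add_sum_erase _ _ (mem_univ k), add_comm]
    congr 1
    refine sum_congr rfl fun i hi => ?_
    rw [hζ i (ne_of_mem_erase hi), hΦ i (ne_of_mem_erase hi)]
  have hflip_ne : ∀ i ≠ k, flip ξ i = ξ i := fun i hi => Function.update_of_ne hi _ _
  have hflip_k : boolSign (flip ξ k) = -boolSign (ξ k) := by
    show boolSign (Function.update ξ k (!ξ k) k) = _
    simp [boolSign_not]
  have hΨ' : ∀ i ≠ k, Ψ' i = Ψ i := fun i hi => (hne i hi).symm
  have hadd := hbdd ξ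
  have hsub := hbdd (flip ξ)
  simp only [hdecomp ξ Ψ' (fun _ _ => rfl) hΨ', hdecomp (flip ξ) Ψ' hflip_ne hΨ', hflip_k,
    neg_mul, ← sub_eq_add_neg] at hadd hsub ⊢
  simp only [hdecomp ξ Ψ (fun _ _ => rfl) (fun _ _ => rfl),
    hdecomp (flip ξ) Ψ hflip_ne (fun _ _ => rfl), hflip_k, neg_mul, ← sub_eq_add_neg]
  refine ciSup_add_ciSup_le_of_abs_sub_le (fun t s => ?_) hadd hsub
  rw [← mul_sub, ← mul_sub, abs_mul, abs_mul, abs_boolSign, one_mul, one_mul]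
  exact hk t s

/-- The Ledoux–Talagrand contraction principle. -/
theorem sum_ciSup_sum_boolSign_mul_comp_le {T : Type*} [Nonempty T] (u : Fin M → T → ℝ)
    {C : ℝ} (hu : ∀ i t, |u i t| ≤ C) {φ : ℝ → ℝ} (hφ : LipschitzWith 1 φ) (hφ0 : φ 0 = 0) :
    ∑ ξ : Fin M → Bool, ⨆ t, ∑ i, boolSign (ξ i) * φ (u i t)
      ≤ ∑ ξ : Fin M → Bool, ⨆ t, ∑ i, boolSign (ξ i) * u i t := by
  classical
  have hφ' : ∀ a b, |φ a - φ b| ≤ |a - b| := fun a b => by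
    simpa [Real.dist_eq] using hφ.dist_le_mul a b
  let Ψ : Finset (Fin M) → Fin M → T → ℝ := fun A i t => if i ∈ A then u i t else φ (u i t)
  have hΨ : ∀ A i t, |Ψ A i t| ≤ C := fun A i t => by
    by_cases hi : i ∈ A
    · simpa [Ψ, hi] using hu i t
    · simpa [Ψ, hi, hφ0] using (hφ' (u i t) 0).trans ((sub_zero (u i t)).symm ▸ hu i t)
  suffices ∀ A, ∑ ξ : Fin M → Bool, ⨆ t, ∑ i, boolSign (ξ i) * φ (u i t)
      ≤ ∑ ξ : Fin M → Bool, ⨆ t, ∑ i, boolSign (ξ i) * Ψ A i t by simpa [Ψ] using this univ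
  intro A
  induction A using Finset.induction_on with
  | empty => simp [Ψ]
  | insert k A hk ih =>
    refine ih.trans (sum_ciSup_sum_boolSign_mul_le_of_ne k (fun i hi => ?_) (fun t s => ?_)
      fun ξ => bddAbove_range_sum_boolSign_mul ξ (hΨ _))
    · ext t; simp [Ψ, hi]
    · simpa [Ψ, hk] using hφ' (u k t) (u k s)

lemma sum_ciSup_abs_sum_boolSign_mul_le {T : Type*} (h : Fin M → T → ℝ) {C : ℝ}
    (hh : ∀ i t, |h i t| ≤ C) {t₀ : T} (ht₀ : ∀ i, h i t₀ = 0) :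
    ∑ ξ : Fin M → Bool, ⨆ t, |∑ i, boolSign (ξ i) * h i t|
      ≤ 2 * ∑ ξ : Fin M → Bool, ⨆ t, ∑ i, boolSign (ξ i) * h i t := by
  have : Nonempty T := ⟨t₀⟩
  let neg : Equiv.Perm (Fin M → Bool) :=
    Function.Involutive.toPerm (fun ξ i => !ξ i) fun ξ => by simp
  have hneg : ∀ ξ t, ∑ i, boolSign (neg ξ i) * h i t = -∑ i, boolSign (ξ i) * h i t :=
    fun ξ t => by
      show ∑ i, boolSign (!ξ i) * h i t = _
      simp [boolSign_not, sum_neg_distrib]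
  have hnonneg : ∀ ξ : Fin M → Bool, 0 ≤ ⨆ t, ∑ i, boolSign (ξ i) * h i t := fun ξ =>
    (by simp [ht₀] : 0 = ∑ i, boolSign (ξ i) * h i t₀).le.trans
      (le_ciSup (bddAbove_range_sum_boolSign_mul ξ hh) t₀)
  calc ∑ ξ : Fin M → Bool, ⨆ t, |∑ i, boolSign (ξ i) * h i t|
      ≤ ∑ ξ : Fin M → Bool, ((⨆ t, ∑ i, boolSign (ξ i) * h i t)
          + ⨆ t, ∑ i, boolSign (neg ξ i) * h i t) := by
        refine sum_le_sum fun ξ _ => ciSup_le fun t => abs_le'.2 ⟨?_, ?_⟩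
        · linarith [le_ciSup (bddAbove_range_sum_boolSign_mul ξ hh) t, hnonneg (neg ξ)]
        · linarith [le_ciSup (bddAbove_range_sum_boolSign_mul (neg ξ) hh) t, hneg ξ t, hnonneg ξ]
    _ = 2 * ∑ ξ : Fin M → Bool, ⨆ t, ∑ i, boolSign (ξ i) * h i t := by
        rw [sum_add_distrib, Equiv.sum_comp neg fun ξ => ⨆ t, ∑ i, boolSign (ξ i) * h i t]
        ring

end Rademacher

def l1Ball (ι : Type*) [Fintype ι] : Set (ι → ℝ) := {θ | ∑ k, |θ k| ≤ 1}

section L1Ball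

variable {ι : Type*} [Fintype ι]

instance : Nonempty (l1Ball ι) := ⟨⟨0, by simp [l1Ball]⟩⟩

lemma abs_sum_mul_le_one {θ : ι → ℝ} (hθ : θ ∈ l1Ball ι) {c : ι → ℝ} (hc : ∀ k, |c k| ≤ 1) :
    |∑ k, θ k * c k| ≤ 1 :=
  calc |∑ k, θ k * c k| ≤ ∑ k, |θ k| * |c k| := by
        simpa only [abs_mul] using abs_sum_le_sum_abs (fun k => θ k * c k) univ
    _ ≤ ∑ k, |θ k| := sum_le_sum fun k _ => mul_le_of_le_one_right (abs_nonneg _) (hc k)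
    _ ≤ 1 := hθ

/-- A linear functional attains its maximum on the `ℓ¹` ball at a vertex `±eₖ`. -/
lemma sum_mul_le_sup'_boolSign_mul [Nonempty ι] {θ : ι → ℝ} (hθ : θ ∈ l1Ball ι) (c : ι → ℝ) :
    ∑ k, θ k * c k ≤ univ.sup' univ_nonempty fun κ : Bool × ι => boolSign κ.1 * c κ.2 := by
  set m := univ.sup' univ_nonempty fun κ : Bool × ι => boolSign κ.1 * c κ.2
  have hc : ∀ k, |c k| ≤ m := fun k => by
    have hneg := le_sup' (fun κ : Bool × ι => boolSign κ.1 * c κ.2) (mem_univ (false, k))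
    have hpos := le_sup' (fun κ : Bool × ι => boolSign κ.1 * c κ.2) (mem_univ (true, k))
    simp only [boolSign_true, boolSign_false, one_mul, neg_one_mul] at hneg hpos
    exact abs_le.2 ⟨by linarith, hpos⟩
  have hm : 0 ≤ m := (abs_nonneg _).trans (hc (Classical.arbitrary ι))
  calc ∑ k, θ k * c k ≤ ∑ k, |θ k| * m :=
        sum_le_sum fun k _ => (le_abs_self _).trans (by rw [abs_mul]; gcongr; exact hc k)
    _ = (∑ k, |θ k|) * m := (sum_mul _ _ _).symm
    _ ≤ m := mul_le_of_le_one_left hm hθ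

lemma le_sum_abs_mul_ciSup_l1Ball {F : (ι → ℝ) → ℝ}
    (hF : ∀ c : ℝ, 0 ≤ c → ∀ θ, F (c • θ) = c * F θ)
    (hbdd : BddAbove (Set.range fun θ : l1Ball ι => F θ)) (θ : ι → ℝ) :
    F θ ≤ (∑ k, |θ k|) * ⨆ θ' : l1Ball ι, F θ' := by
  rcases (sum_nonneg fun k _ => abs_nonneg (θ k)).eq_or_lt with hn | hn
  · have hθ : θ = 0 := funext fun k => abs_eq_zero.1
      ((sum_eq_zero_iff_of_nonneg fun k _ => abs_nonneg (θ k)).1 hn.symm k (mem_univ k))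
    rw [← hn, zero_mul, hθ, ← zero_smul ℝ (0 : ι → ℝ), hF 0 le_rfl, zero_mul]
  · set n := ∑ k, |θ k|
    have hmem : n⁻¹ • θ ∈ l1Ball ι := by
      simp [l1Ball, abs_mul, ← mul_sum, abs_of_pos (inv_pos.2 hn), inv_mul_cancel₀ hn.ne', n]
    calc F θ = n * F (n⁻¹ • θ) := by rw [← hF n hn.le, smul_inv_smul₀ hn.ne']
      _ ≤ n * ⨆ θ' : l1Ball ι, F θ' := by gcongr; exact le_ciSup hbdd ⟨_, hmem⟩

variable {M : ℕ}

theorem sum_ciSup_l1Ball_sum_boolSign_mul_le [Nonempty ι] (φ : Fin M → ι → ℝ)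
    (hφ : ∀ i k, |φ i k| ≤ 1) :
    ∑ ξ : Fin M → Bool, ⨆ θ : l1Ball ι, ∑ i, boolSign (ξ i) * ∑ k, θ.1 k * φ i k
      ≤ 2 ^ M * √(2 * M * log (2 * Fintype.card ι)) := by
  let v : Bool × ι → Fin M → ℝ := fun κ i => boolSign κ.1 * φ i κ.2
  have hv : ∀ κ i, |v κ i| ≤ 1 := fun κ i => by
    simpa [v, abs_mul, abs_boolSign] using hφ i κ.2
  have hcard : 1 < Fintype.card (Bool × ι) := by
    rw [Fintype.card_prod, Fintype.card_bool]; have := Fintype.card_pos (α := ι); omega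
  calc ∑ ξ : Fin M → Bool, ⨆ θ : l1Ball ι, ∑ i, boolSign (ξ i) * ∑ k, θ.1 k * φ i k
      ≤ ∑ ξ : Fin M → Bool, univ.sup' univ_nonempty fun κ => ∑ i, boolSign (ξ i) * v κ i := by
        refine sum_le_sum fun ξ _ => ciSup_le fun θ => ?_
        calc ∑ i, boolSign (ξ i) * ∑ k, θ.1 k * φ i k
            = ∑ k, θ.1 k * ∑ i, boolSign (ξ i) * φ i k := by
              simp only [mul_sum]
              rw [sum_comm]
              exact sum_congr rfl fun _ _ => sum_congr rfl fun _ _ => by ring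
          _ ≤ univ.sup' univ_nonempty
                fun κ : Bool × ι => boolSign κ.1 * ∑ i, boolSign (ξ i) * φ i κ.2 :=
              sum_mul_le_sup'_boolSign_mul θ.2 _
          _ = univ.sup' univ_nonempty fun κ => ∑ i, boolSign (ξ i) * v κ i := by
              refine sup'_congr _ rfl fun κ _ => ?_
              simp only [v, mul_sum]
              exact sum_congr rfl fun _ _ => by ring
    _ ≤ 2 ^ M * √(2 * M * log (Fintype.card (Bool × ι))) :=
        sum_sup'_sum_boolSign_mul_le hcard v hv
    _ = 2 ^ M * √(2 * M * log (2 * Fintype.card ι)) := by simp [Fintype.card_prod]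

end L1Ball

lemma abs_max_zero_le (a : ℝ) : |max a 0| ≤ |a| := by
  simpa using abs_max_sub_max_le_abs a 0 0

section AveragedNeuron

variable {M : ℕ} {G ι : Type*} [Fintype G] [Fintype ι]

noncomputable def avgNeuron (φ : G → Fin M → ι → ℝ) (θ : ι → ℝ) (i : Fin M) : ℝ :=
  (Fintype.card G : ℝ)⁻¹ * ∑ g, max (∑ k, θ k * φ g i k) 0

lemma avgNeuron_smul (φ : G → Fin M → ι → ℝ) {c : ℝ} (hc : 0 ≤ c) (θ : ι → ℝ)
    (i : Fin M) : avgNeuron φ (c • θ) i = c * avgNeuron φ θ i := by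
  have hrelu : ∀ g, max (c * ∑ k, θ k * φ g i k) 0 = c * max (∑ k, θ k * φ g i k) 0 :=
    fun g => by rw [mul_max_of_nonneg _ _ hc, mul_zero]
  simp only [avgNeuron, Pi.smul_apply, smul_eq_mul, mul_assoc, ← mul_sum, hrelu]
  ring

lemma abs_avgNeuron_le_one [Nonempty G] {φ : G → Fin M → ι → ℝ}
    (hφ : ∀ g i k, |φ g i k| ≤ 1) {θ : ι → ℝ} (hθ : θ ∈ l1Ball ι) (i : Fin M) :
    |avgNeuron φ θ i| ≤ 1 := by
  have hG : (0 : ℝ) < Fintype.card G := by exact_mod_cast Fintype.card_pos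
  rw [avgNeuron, abs_mul, abs_inv, Nat.abs_cast, inv_mul_le_iff₀ hG, mul_one]
  calc |∑ g, max (∑ k, θ k * φ g i k) 0| ≤ ∑ g, |max (∑ k, θ k * φ g i k) 0| :=
        abs_sum_le_sum_abs (fun g => max (∑ k, θ k * φ g i k) 0) univ
    _ ≤ ∑ _g : G, (1 : ℝ) := sum_le_sum fun g _ => (abs_max_zero_le _).trans
          (abs_sum_mul_le_one hθ (hφ g i))
    _ = Fintype.card G := by simp

theorem sum_ciSup_l1Ball_sum_boolSign_mul_avgNeuron_le [Nonempty G] [Nonempty ι]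
    (φ : G → Fin M → ι → ℝ) (hφ : ∀ g i k, |φ g i k| ≤ 1) :
    ∑ ξ : Fin M → Bool, ⨆ θ : l1Ball ι, ∑ i, boolSign (ξ i) * avgNeuron φ θ i
      ≤ 2 ^ M * √(2 * M * log (2 * Fintype.card ι)) := by
  set B := 2 ^ M * √(2 * M * log (2 * Fintype.card ι))
  have hG : (0 : ℝ) < Fintype.card G := by exact_mod_cast Fintype.card_pos
  let relu : G → Fin M → l1Ball ι → ℝ := fun g i θ => max (∑ k, θ.1 k * φ g i k) 0
  have hrelu : ∀ g, ∑ ξ : Fin M → Bool, ⨆ θ, ∑ i, boolSign (ξ i) * relu g i θ ≤ B :=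
    fun g => (sum_ciSup_sum_boolSign_mul_comp_le (fun i (θ : l1Ball ι) => ∑ k, θ.1 k * φ g i k)
      (fun i θ => abs_sum_mul_le_one θ.2 (hφ g i)) (LipschitzWith.id.max_const 0)
      (max_self 0)).trans (sum_ciSup_l1Ball_sum_boolSign_mul_le (φ g) (hφ g))
  have hbdd : ∀ (ξ : Fin M → Bool) g,
      BddAbove (Set.range fun θ => ∑ i, boolSign (ξ i) * relu g i θ) :=
    fun ξ g => bddAbove_range_sum_boolSign_mul ξ (C := 1) fun i θ =>
      (abs_max_zero_le _).trans (abs_sum_mul_le_one θ.2 (hφ g i))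
  calc ∑ ξ : Fin M → Bool, ⨆ θ : l1Ball ι, ∑ i, boolSign (ξ i) * avgNeuron φ θ i
      ≤ ∑ ξ : Fin M → Bool,
          (Fintype.card G : ℝ)⁻¹ * ∑ g, ⨆ θ, ∑ i, boolSign (ξ i) * relu g i θ := by
        refine sum_le_sum fun ξ _ => ciSup_le fun θ => ?_
        calc ∑ i, boolSign (ξ i) * avgNeuron φ θ i
            = (Fintype.card G : ℝ)⁻¹ * ∑ g, ∑ i, boolSign (ξ i) * relu g i θ := by
              simp only [avgNeuron, relu, mul_sum]
              rw [sum_comm]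
              exact sum_congr rfl fun _ _ => sum_congr rfl fun _ _ => by ring
          _ ≤ _ := by gcongr with g; exact le_ciSup (hbdd ξ g) θ
    _ = (Fintype.card G : ℝ)⁻¹ *
          ∑ g, ∑ ξ : Fin M → Bool, ⨆ θ, ∑ i, boolSign (ξ i) * relu g i θ := by
        rw [← mul_sum, sum_comm]
    _ ≤ (Fintype.card G : ℝ)⁻¹ * ∑ _g : G, B := by gcongr with g; exact hrelu g
    _ = B := by simp [hG.ne']

theorem sum_ciSup_l1Ball_abs_sum_boolSign_mul_avgNeuron_le [Nonempty G] [Nonempty ι]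
    (φ : G → Fin M → ι → ℝ) (hφ : ∀ g i k, |φ g i k| ≤ 1) :
    ∑ ξ : Fin M → Bool, ⨆ θ : l1Ball ι, |∑ i, boolSign (ξ i) * avgNeuron φ θ i|
      ≤ 2 * (2 ^ M * √(2 * M * log (2 * Fintype.card ι))) :=
  (sum_ciSup_abs_sum_boolSign_mul_le (fun i (θ : l1Ball ι) => avgNeuron φ θ i)
    (fun i θ => abs_avgNeuron_le_one hφ θ.2 i) (t₀ := ⟨0, by simp [l1Ball]⟩)
    fun i => by simp [avgNeuron]).trans
    (by gcongr; exact sum_ciSup_l1Ball_sum_boolSign_mul_avgNeuron_le φ hφ)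

end AveragedNeuron

section ReLUClass

variable {d M : ℕ} {G : Type*} [Group G] [Fintype G] [MulAction G (Fin d → ℝ)]

/-- Appending the constant coordinate `1` turns the bias of a neuron into a weight. -/
def augment (z : Fin d → ℝ) : Fin d ⊕ Unit → ℝ := Sum.elim z 1

lemma abs_augment_le_one {z : Fin d → ℝ} (hz : ∀ j, |z j| ≤ 1) (k : Fin d ⊕ Unit) :
    |augment z k| ≤ 1 := by
  cases k <;> simp [augment, hz]

lemma sum_elim_mul_augment (w z : Fin d → ℝ) (b : ℝ) :
    ∑ k, Sum.elim w (fun _ => b) k * augment z k = ∑ j, w j * z j + b := by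
  simp [augment, Fintype.sum_sum_type]

lemma reluClassG_nonempty {R : ℝ} (hR : 0 ≤ R) : (reluClassG (d := d) G R).Nonempty :=
  ⟨0, 1, le_rfl, 0, 0, 0, by simpa using hR, by ext; simp⟩

lemma sSup_image_reluClassG_le {R : ℝ} (hR : 0 ≤ R) (x : Fin M → Fin d → ℝ)
    (hx : ∀ (g : G) i j, |(g • x i) j| ≤ 1) (ξ : Fin M → Bool) :
    sSup ((fun f => ∑ i, boolSign (ξ i) * f (x i)) '' reluClassG G R)
      ≤ R * ⨆ θ : l1Ball (Fin d ⊕ Unit),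
        |∑ i, boolSign (ξ i) * avgNeuron (fun (g : G) i => augment (g • x i)) θ i| := by
  set φ := fun (g : G) i => augment (g • x i)
  set S := fun θ => ∑ i, boolSign (ξ i) * avgNeuron φ θ i
  have hbdd : BddAbove (Set.range fun θ : l1Ball (Fin d ⊕ Unit) => |S θ|) :=
    ⟨M * 1, by
      rintro _ ⟨θ, rfl⟩
      exact abs_sum_boolSign_mul_le ξ fun i =>
        abs_avgNeuron_le_one (fun g i => abs_augment_le_one (hx g i)) θ.2 i⟩
  have hhom : ∀ c : ℝ, 0 ≤ c → ∀ θ, |S (c • θ)| = c * |S θ| := fun c hc θ => by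
    simp only [S, avgNeuron_smul φ hc, mul_left_comm _ c, ← mul_sum, abs_mul, abs_of_nonneg hc]
  refine csSup_le ((reluClassG_nonempty hR).image _) ?_
  rintro _ ⟨f, ⟨K, -, a, w, b, hpath, rfl⟩, rfl⟩
  let θ : Fin K → Fin d ⊕ Unit → ℝ := fun p => Sum.elim (w p) fun _ => b p
  have hθ : ∀ p, ∑ k, |θ p k| = ∑ j, |w p j| + |b p| := fun p => by
    simp [θ, Fintype.sum_sum_type]
  calc ∑ i, boolSign (ξ i) * ∑ p, a p * ((Fintype.card G : ℝ)⁻¹ *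
          ∑ g : G, max ((∑ j, w p j * (g • x i) j) + b p) 0)
      = ∑ p, a p * S (θ p) := by
        simp only [S, avgNeuron, φ, θ, sum_elim_mul_augment, mul_sum]
        rw [sum_comm]
        exact sum_congr rfl fun _ _ => sum_congr rfl fun _ _ => sum_congr rfl fun _ _ => by ring
    _ ≤ ∑ p, |a p| * ((∑ j, |w p j| + |b p|) * ⨆ θ : l1Ball (Fin d ⊕ Unit), |S θ|) := by
        refine sum_le_sum fun p _ => ?_
        rw [← hθ]
        calc a p * S (θ p) ≤ |a p| * |S (θ p)| := by rw [← abs_mul]; exact le_abs_self _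
          _ ≤ _ := by
            gcongr
            exact le_sum_abs_mul_ciSup_l1Ball (F := fun θ => |S θ|) hhom hbdd (θ p)
    _ = (∑ p, |a p| * (∑ j, |w p j| + |b p|)) * ⨆ θ : l1Ball (Fin d ⊕ Unit), |S θ| := by
        rw [sum_mul]; simp only [mul_assoc]
    _ ≤ R * ⨆ θ : l1Ball (Fin d ⊕ Unit), |S θ| :=
        mul_le_mul_of_nonneg_right hpath (Real.iSup_nonneg fun _ => abs_nonneg _)

theorem sum_sSup_image_reluClassG_le {R : ℝ} (hR : 0 ≤ R) (x : Fin M → Fin d → ℝ)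
    (hx : ∀ (g : G) i j, |(g • x i) j| ≤ 1) :
    ∑ ξ : Fin M → Bool, sSup ((fun f => ∑ i, boolSign (ξ i) * f (x i)) '' reluClassG G R)
      ≤ R * (2 * (2 ^ M * √(2 * M * log (2 * d + 2)))) := by
  have hcard : 2 * (Fintype.card (Fin d ⊕ Unit) : ℝ) = 2 * d + 2 := by
    rw [Fintype.card_sum, Fintype.card_fin, Fintype.card_unit]; push_cast; ring
  calc _ ≤ ∑ ξ : Fin M → Bool, R * ⨆ θ : l1Ball (Fin d ⊕ Unit),
          |∑ i, boolSign (ξ i) * avgNeuron (fun (g : G) i => augment (g • x i)) θ i| :=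
        sum_le_sum fun ξ _ => sSup_image_reluClassG_le hR x hx ξ
    _ ≤ _ := by
        rw [← mul_sum, ← hcard]
        gcongr
        exact sum_ciSup_l1Ball_abs_sum_boolSign_mul_avgNeuron_le _
          fun g i => abs_augment_le_one (hx g i)

end ReLUClass

lemma sqrt_mul_div_self_eq {a : ℝ} (ha : 0 ≤ a) (b : ℝ) : √(a * b) / a = √(b / a) := by
  rw [sqrt_mul ha, mul_div_right_comm, sqrt_div_self', sqrt_div' _ ha, one_div_mul_eq_div]

theorem empRad_reluClassG_bound_general {d M : ℕ}
    {G : Type*} [Group G] [Fintype G] [MulAction G (Fin d → ℝ)]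
    (Ω : Set (Fin d → ℝ)) (hΩ : ∀ (g : G), ∀ z ∈ Ω, ∀ i, |(g • z) i| ≤ 1)
    (R : ℝ) (hR : 0 ≤ R)
    (x : Fin M → Fin d → ℝ) (hx : ∀ i, x i ∈ Ω) :
    empRad (reluClassG G R) x ≤
      2 * Real.sqrt 2 * R * Real.sqrt (2 * Real.log (2 * d + 2) / M) := by
  have hsum := sum_sSup_image_reluClassG_le hR x fun (g : G) i => hΩ g _ (hx i)
  have hsqrt : √(2 * M * log (2 * d + 2)) / M = √(2 * log (2 * d + 2) / M) := by
    rw [mul_comm 2, mul_assoc, sqrt_mul_div_self_eq (Nat.cast_nonneg M)]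
  calc empRad (reluClassG G R) x
      ≤ (M : ℝ)⁻¹ * ((2 ^ M : ℝ)⁻¹ * (R * (2 * (2 ^ M * √(2 * M * log (2 * d + 2)))))) := by
        unfold empRad; gcongr; exact hsum
    _ = 2 * R * √(2 * log (2 * d + 2) / M) := by
        rw [← hsqrt]; field_simp
    _ ≤ 2 * √2 * R * √(2 * log (2 * d + 2) / M) := by
        gcongr
        exact le_mul_of_one_le_right zero_le_two (one_le_sqrt.2 one_le_two)

/-- Rademacher bound for the `G`-averaged ReLU class:
`R̂_S(ℳ_R) ≤ 2√2 · R · √(2 log(2d+2)/M)`. -/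
theorem empRad_reluClassG_bound {d M : ℕ} (hM : 0 < M)
    {G : Type*} [Group G] [Fintype G] [MulAction G (Fin d → ℝ)]
    (hlin : ∀ g : G, IsLinearMap ℝ (fun z : Fin d → ℝ => g • z))
    (Ω : Set (Fin d → ℝ)) (hΩ : ∀ (g : G), ∀ z ∈ Ω, ∀ i, |(g • z) i| ≤ 1)
    (R : ℝ) (hR : 0 ≤ R)
    (x : Fin M → Fin d → ℝ) (hx : ∀ i, x i ∈ Ω) :
    empRad (reluClassG G R) x ≤
      2 * Real.sqrt 2 * R * Real.sqrt (2 * Real.log (2 * d + 2) / M) :=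
  empRad_reluClassG_bound_general Ω hΩ R hR x hx
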